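/- Let X, Y, U, Z be random variables on finite sets with joint pmf p, and suppose the Markov chains U - X - (Y, Z) and Z - (U, Y) - X hold. Then for every x, y, u, z with p(x, y) > 0 and p(u | x) > 0 and p(u, y) > 0, we have p(z | x, y) = p(z | u, y). -/
import Mathlib


open Finset

open Classical in
noncomputable def prob {Ω α : Type*} [Fintype Ω] (p : Ω → ℝ) (X : Ω → α) (x : α) : ℝ :=
  ∑ ω, if X ω = x then p ω else 0

noncomputable def H2 {Ω α : Type*} [Fintype Ω] [Fintype α] (p : Ω → ℝ) (X : Ω → α) : ℝ :=
  -∑ x, prob p X x * Real.logb 2 (prob p X x)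

noncomputable def condH {Ω α β : Type*} [Fintype Ω] [Fintype α] [Fintype β]
    (p : Ω → ℝ) (X : Ω → α) (Y : Ω → β) : ℝ :=
  -∑ x, ∑ y, prob p (fun ω => (X ω, Y ω)) (x, y) *
      Real.logb 2 (prob p (fun ω => (X ω, Y ω)) (x, y) / prob p Y y)

noncomputable def MI {Ω α β : Type*} [Fintype Ω] [Fintype α] [Fintype β]
    (p : Ω → ℝ) (X : Ω → α) (Y : Ω → β) : ℝ :=
  ∑ x, ∑ y, prob p (fun ω => (X ω, Y ω)) (x, y) *
      Real.logb 2 (prob p (fun ω => (X ω, Y ω)) (x, y) / (prob p X x * prob p Y y))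

noncomputable def condMI {Ω α β γ : Type*} [Fintype Ω] [Fintype α] [Fintype β] [Fintype γ]
    (p : Ω → ℝ) (X : Ω → α) (Y : Ω → β) (Z : Ω → γ) : ℝ :=
  ∑ x, ∑ y, ∑ z, prob p (fun ω => (X ω, Y ω, Z ω)) (x, y, z) *
      Real.logb 2 (prob p (fun ω => (X ω, Y ω, Z ω)) (x, y, z) * prob p Z z /
        (prob p (fun ω => (X ω, Z ω)) (x, z) * prob p (fun ω => (Y ω, Z ω)) (y, z)))

def IsPMF {Ω : Type*} [Fintype Ω] (p : Ω → ℝ) : Prop :=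
  (∀ ω, 0 ≤ p ω) ∧ ∑ ω, p ω = 1

def MarkovChain {Ω α β γ : Type*} [Fintype Ω] (p : Ω → ℝ)
    (A : Ω → α) (B : Ω → β) (C : Ω → γ) : Prop :=
  ∀ a b c, prob p (fun ω => (A ω, B ω, C ω)) (a, b, c) * prob p B b =
    prob p (fun ω => (A ω, B ω)) (a, b) * prob p (fun ω => (C ω, B ω)) (c, b)


lemma prob_congr {Ω α β : Type*} [Fintype Ω] (p : Ω → ℝ) (A : Ω → α) (B : Ω → β)
    (a : α) (b : β) (h : ∀ ω, A ω = a ↔ B ω = b) : prob p A a = prob p B b := by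
  classical
  unfold prob
  exact Finset.sum_congr rfl fun ω _ => by
    by_cases hω : A ω = a
    · rw [if_pos hω, if_pos ((h ω).1 hω)]
    · rw [if_neg hω, if_neg (fun hb => hω ((h ω).2 hb))]

lemma prob_nonneg {Ω α : Type*} [Fintype Ω] {p : Ω → ℝ} (hp : ∀ ω, 0 ≤ p ω)
    (A : Ω → α) (a : α) : 0 ≤ prob p A a := by
  classical
  unfold prob
  exact Finset.sum_nonneg fun ω _ => by split <;> simp [hp ω]

lemma prob_mono {Ω α β : Type*} [Fintype Ω] {p : Ω → ℝ} (hp : ∀ ω, 0 ≤ p ω)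
    (A : Ω → α) (B : Ω → β) (a : α) (b : β) (h : ∀ ω, B ω = b → A ω = a) :
    prob p B b ≤ prob p A a := by
  classical
  unfold prob
  refine Finset.sum_le_sum fun ω _ => ?_
  by_cases hω : B ω = b
  · rw [if_pos hω, if_pos (h ω hω)]
  · rw [if_neg hω]; split <;> simp [hp ω]

open Classical in
lemma prob_marg {Ω α γ : Type*} [Fintype Ω] (p : Ω → ℝ) (A : Ω → α) (W : Ω → γ) (a : α) :
    prob p A a = ∑ w ∈ Finset.univ.image W, prob p (fun ω => (A ω, W ω)) (a, w) := by
  classical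
  unfold prob
  rw [Finset.sum_comm]
  refine Finset.sum_congr rfl fun ω _ => ?_
  simp only [Prod.mk.injEq]
  by_cases hω : A ω = a
  · simp only [hω, true_and, if_pos]
    rw [Finset.sum_ite_eq (Finset.univ.image W) (W ω)]
    simp
  · simp [hω]


theorem stmt7' {Ω 𝒳 𝒴 𝒰 𝒵 : Type*} [Fintype Ω]
    (p : Ω → ℝ) (hp : (∀ ω, 0 ≤ p ω) ∧ ∑ ω, p ω = 1)
    (X : Ω → 𝒳) (Y : Ω → 𝒴) (U : Ω → 𝒰) (Z : Ω → 𝒵)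
    (hA : ∀ a b c, prob p (fun ω => (U ω, X ω, (Y ω, Z ω))) (a, b, c) * prob p X b =
      prob p (fun ω => (U ω, X ω)) (a, b) * prob p (fun ω => ((Y ω, Z ω), X ω)) (c, b))
    (hB : ∀ a b c, prob p (fun ω => (Z ω, (U ω, Y ω), X ω)) (a, b, c) * prob p (fun ω => (U ω, Y ω)) b =
      prob p (fun ω => (Z ω, (U ω, Y ω))) (a, b) * prob p (fun ω => (X ω, (U ω, Y ω))) (c, b)) :
    ∀ x y u z, 0 < prob p (fun ω => (X ω, Y ω)) (x, y) →
      0 < prob p (fun ω => (U ω, X ω)) (u, x) →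
      0 < prob p (fun ω => (U ω, Y ω)) (u, y) →
      prob p (fun ω => (Z ω, X ω, Y ω)) (z, x, y) / prob p (fun ω => (X ω, Y ω)) (x, y) =
        prob p (fun ω => (Z ω, U ω, Y ω)) (z, u, y) /
          prob p (fun ω => (U ω, Y ω)) (u, y) := by
  classical
  intro x y u z hxy hux huy
  have eq1 : prob p (fun ω => (U ω, X ω, Y ω, Z ω)) (u, x, y, z) * prob p X x =
      prob p (fun ω => (U ω, X ω)) (u, x) * prob p (fun ω => (Z ω, X ω, Y ω)) (z, x, y) := by
    have h := hA u x (y, z)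
    rw [prob_congr p (fun ω => ((Y ω, Z ω), X ω)) (fun ω => (Z ω, X ω, Y ω)) ((y, z), x) (z, x, y)
      (fun ω => by simp only [Prod.mk.injEq]; tauto)] at h
    exact h
  have eq2 : prob p (fun ω => (U ω, X ω, Y ω)) (u, x, y) * prob p X x =
      prob p (fun ω => (U ω, X ω)) (u, x) * prob p (fun ω => (X ω, Y ω)) (x, y) := by
    rw [prob_marg p (fun ω => (U ω, X ω, Y ω)) Z (u, x, y),
      prob_marg p (fun ω => (X ω, Y ω)) Z (x, y), Finset.sum_mul, Finset.mul_sum]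
    refine Finset.sum_congr rfl fun w _ => ?_
    have h := hA u x (y, w)
    rw [prob_congr p (fun ω => (U ω, X ω, (Y ω, Z ω))) (fun ω => ((U ω, X ω, Y ω), Z ω))
      (u, x, (y, w)) ((u, x, y), w) (fun ω => by simp only [Prod.mk.injEq]; tauto)] at h
    rw [prob_congr p (fun ω => ((Y ω, Z ω), X ω)) (fun ω => ((X ω, Y ω), Z ω))
      ((y, w), x) ((x, y), w) (fun ω => by simp only [Prod.mk.injEq]; tauto)] at h
    exact h
  have eq3 : prob p (fun ω => (U ω, X ω, Y ω, Z ω)) (u, x, y, z) *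
      prob p (fun ω => (U ω, Y ω)) (u, y) =
      prob p (fun ω => (Z ω, U ω, Y ω)) (z, u, y) *
      prob p (fun ω => (U ω, X ω, Y ω)) (u, x, y) := by
    have h := hB z (u, y) x
    rw [prob_congr p (fun ω => (Z ω, (U ω, Y ω), X ω)) (fun ω => (U ω, X ω, Y ω, Z ω))
      (z, (u, y), x) (u, x, y, z) (fun ω => by simp only [Prod.mk.injEq]; tauto)] at h
    rw [prob_congr p (fun ω => (X ω, (U ω, Y ω))) (fun ω => (U ω, X ω, Y ω))
      (x, (u, y)) (u, x, y) (fun ω => by simp only [Prod.mk.injEq]; tauto)] at h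
    exact h
  set pxy := prob p (fun ω => (X ω, Y ω)) (x, y)
  set pux := prob p (fun ω => (U ω, X ω)) (u, x)
  set puy := prob p (fun ω => (U ω, Y ω)) (u, y)
  set pzxy := prob p (fun ω => (Z ω, X ω, Y ω)) (z, x, y)
  set pzuy := prob p (fun ω => (Z ω, U ω, Y ω)) (z, u, y)
  set px := prob p X x
  set Q := prob p (fun ω => (U ω, X ω, Y ω, Z ω)) (u, x, y, z)
  set T := prob p (fun ω => (U ω, X ω, Y ω)) (u, x, y)
  have hpxpos : 0 < px := lt_of_lt_of_le hxy
    (prob_mono hp.1 X (fun ω => (X ω, Y ω)) x (x, y)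
      (fun ω h => by simp only [Prod.mk.injEq] at h; exact h.1))
  have hTpos : 0 < T := by nlinarith [mul_pos hux hxy]
  rw [div_eq_div_iff (ne_of_gt hxy) (ne_of_gt huy)]
  have key : pux * (pzxy * puy) = pux * (pzuy * pxy) := by
    linear_combination (-puy) * eq1 + px * eq3 + pzuy * eq2
  exact mul_left_cancel₀ (ne_of_gt hux) key

/-- under U - X - (Y,Z) and Z - (U,Y) - X, whenever p(x,y) > 0,
p(u|x) > 0 and p(u,y) > 0, we have p(z|x,y) = p(z|u,y). -/
theorem stmt7 {Ω 𝒳 𝒴 𝒰 𝒵 : Type*} [Fintype Ω]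
    (p : Ω → ℝ) (hp : IsPMF p)
    (X : Ω → 𝒳) (Y : Ω → 𝒴) (U : Ω → 𝒰) (Z : Ω → 𝒵)
    (hA : MarkovChain p U X (fun ω => (Y ω, Z ω)))
    (hB : MarkovChain p Z (fun ω => (U ω, Y ω)) X) :
    ∀ x y u z, 0 < prob p (fun ω => (X ω, Y ω)) (x, y) →
      0 < prob p (fun ω => (U ω, X ω)) (u, x) →
      0 < prob p (fun ω => (U ω, Y ω)) (u, y) →
      prob p (fun ω => (Z ω, X ω, Y ω)) (z, x, y) / prob p (fun ω => (X ω, Y ω)) (x, y) =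
        prob p (fun ω => (Z ω, U ω, Y ω)) (z, u, y) /
          prob p (fun ω => (U ω, Y ω)) (u, y) :=
  stmt7' p hp X Y U Z hA hB
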